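/- Let m > 3 and let Δ = (a₁, …, a_m) be a sequence of nonzero vectors in ℤ² with a₁ + … + a_m = 0 which spans ℝ², ordered cyclically so that the arguments arg(a_k) ∈ [0, 2π) are nondecreasing in k (indices taken modulo m). Let i be an index such that a_i is not collinear with a_{i−1} or a_i is not collinear with a_{i+1}, and let j be an integer with 1 ≤ j ≤ m − 3. Then there exists an index k such that the cyclic block a_k, a_{k+1}, …, a_{k+j} (of j + 1 consecutive vectors, indices modulo m) contains a_i, the vectors of the block span ℝ², their sum a' = a_k + … + a_{k+j} is nonzero, and the sequence Δ' obtained from Δ by removing the block and appending a' consists of nonzero vectors, sums to 0, and spans ℝ². -/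

import Mathlib

/-- The wedge product `a ∧ b = a₁b₂ − a₂b₁` of two vectors (here in `ℤ²`). -/
def wedge (a b : ℤ × ℤ) : ℤ := a.1 * b.2 - a.2 * b.1

/-- The argument in `[0, 2π)` of a vector `a ∈ ℤ²`, viewed as the complex number
`a¹ + i·a²`. -/
noncomputable def arg2pi (a : ℤ × ℤ) : ℝ :=
  if Complex.arg ((a.1 : ℂ) + (a.2 : ℂ) * Complex.I) < 0 then
    Complex.arg ((a.1 : ℂ) + (a.2 : ℂ) * Complex.I) + 2 * Real.pi
  else Complex.arg ((a.1 : ℂ) + (a.2 : ℂ) * Complex.I)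

/-- The inclusion `ℤ² → ℝ²`. -/
def toR (a : ℤ × ℤ) : ℝ × ℝ := ((a.1 : ℝ), (a.2 : ℝ))

/-- The clockwise rotation by `π/2`: `R(x, y) = (y, −x)`. -/
def rot (a : ℤ × ℤ) : ℤ × ℤ := (a.2, -a.1)

/-!
Choose adjacent noncollinear vectors `a p`, `a (p + 1)`, one of them `a i`, such that the other
`m - 2` vectors are not all collinear: if they are for one of the two candidate pairs around `i`,
balance forces the other pair to work. Take the block to be the cyclic complement of a window of
`m - 1 - j ≥ 2` consecutive vectors among these `m - 2`. The block then contains the pair, so it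
spans; its sum is minus the window sum; and the new family contains the window. So it suffices to
find a window that is not collinear and has nonzero sum, which is done by sliding windows, using
that the angular order keeps the `m - 2` vectors within less than a full turn.
-/

open Finset

lemma wedge_self (x : ℤ × ℤ) : wedge x x = 0 := by
  rw [wedge, mul_comm, sub_self]

lemma wedge_comm (x y : ℤ × ℤ) : wedge y x = -wedge x y := by
  simp only [wedge]; ring

lemma wedge_neg_left (x y : ℤ × ℤ) : wedge (-x) y = -wedge x y := by
  simp only [wedge, Prod.fst_neg, Prod.snd_neg]; ring

lemma wedge_add_left (x y z : ℤ × ℤ) : wedge (x + y) z = wedge x z + wedge y z := by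
  simp only [wedge, Prod.fst_add, Prod.snd_add]; ring

lemma wedge_sum_left {ι : Type*} (s : Finset ι) (f : ι → ℤ × ℤ) (y : ℤ × ℤ) :
    wedge (∑ x ∈ s, f x) y = ∑ x ∈ s, wedge (f x) y := by
  simp only [wedge, Prod.fst_sum, Prod.snd_sum, sum_mul, ← sum_sub_distrib]

lemma wedge_eq_zero_trans {x y z : ℤ × ℤ} (hxy : wedge x y = 0) (hyz : wedge y z = 0)
    (hy : y ≠ 0) : wedge x z = 0 := by
  have h1 : y.1 * wedge x z = x.1 * wedge y z + z.1 * wedge x y := by simp only [wedge]; ring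
  have h2 : y.2 * wedge x z = x.2 * wedge y z + z.2 * wedge x y := by simp only [wedge]; ring
  rw [hxy, hyz, mul_zero, mul_zero, add_zero] at h1 h2
  by_contra h
  exact hy (Prod.ext ((mul_eq_zero.1 h1).resolve_right h) ((mul_eq_zero.1 h2).resolve_right h))

lemma span_eq_top_of_wedge_ne_zero {x y : ℤ × ℤ} (h : wedge x y ≠ 0) {S : Set (ℝ × ℝ)}
    (hx : toR x ∈ S) (hy : toR y ∈ S) : Submodule.span ℝ S = ⊤ := by
  have hW : (x.1 * y.2 - x.2 * y.1 : ℝ) ≠ 0 := by exact_mod_cast h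
  have hli : LinearIndependent ℝ ![toR x, toR y] := by
    refine LinearIndependent.pair_iff.2 fun s t hst => ?_
    simp only [toR, Prod.smul_mk, smul_eq_mul, Prod.mk_add_mk, Prod.mk_eq_zero] at hst
    obtain ⟨h1, h2⟩ := hst
    constructor
    · refine (mul_eq_zero.1 (?_ : s * (x.1 * y.2 - x.2 * y.1 : ℝ) = 0)).resolve_right hW
      linear_combination (y.2 : ℝ) * h1 - (y.1 : ℝ) * h2
    · refine (mul_eq_zero.1 (?_ : t * (x.1 * y.2 - x.2 * y.1 : ℝ) = 0)).resolve_right hW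
      linear_combination (x.1 : ℝ) * h2 - (x.2 : ℝ) * h1
  refine eq_top_mono (Submodule.span_mono ?_) (hli.span_eq_top_of_card_eq_finrank ?_)
  · rintro _ ⟨k, rfl⟩
    fin_cases k
    exacts [hx, hy]
  · simp

lemma complex_ne_zero_of_ne_zero {z : ℤ × ℤ} (hz : z ≠ 0) :
    (z.1 : ℂ) + (z.2 : ℂ) * Complex.I ≠ 0 := by
  contrapose! hz
  have h1 := congrArg Complex.re hz
  have h2 := congrArg Complex.im hz
  simp only [Complex.add_re, Complex.add_im, Complex.intCast_re, Complex.intCast_im,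
    Complex.mul_re, Complex.mul_im, Complex.I_re, Complex.I_im, Complex.zero_re,
    Complex.zero_im] at h1 h2
  ext <;> simp_all

lemma wedge_eq_zero_of_arg2pi_eq {x y : ℤ × ℤ} (hx : x ≠ 0) (hy : y ≠ 0)
    (h : arg2pi x = arg2pi y) : wedge x y = 0 := by
  set zx : ℂ := (x.1 : ℂ) + (x.2 : ℂ) * Complex.I
  set zy : ℂ := (y.1 : ℂ) + (y.2 : ℂ) * Complex.I
  have harg : Complex.arg zx = Complex.arg zy := by
    have := Complex.neg_pi_lt_arg zx
    have := Complex.arg_le_pi zx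
    have := Complex.neg_pi_lt_arg zy
    have := Complex.arg_le_pi zy
    unfold arg2pi at h
    split_ifs at h <;> linarith
  rw [Complex.arg_eq_arg_iff (complex_ne_zero_of_ne_zero hx) (complex_ne_zero_of_ne_zero hy)]
    at harg
  set c : ℝ := ‖zy‖ / ‖zx‖
  have h1 : (y.1 : ℝ) = c * x.1 := by simpa [zx, zy] using (congrArg Complex.re harg).symm
  have h2 : (y.2 : ℝ) = c * x.2 := by simpa [zx, zy] using (congrArg Complex.im harg).symm
  have : (wedge x y : ℝ) = 0 := by
    simp only [wedge, Int.cast_sub, Int.cast_mul, h1, h2]; ring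
  exact_mod_cast this

section NoncollinearPair

variable {ι : Type*} (b : ι → ℤ × ℤ)

def HasNoncollinearPair (S : Finset ι) : Prop :=
  ∃ u ∈ S, ∃ v ∈ S, wedge (b u) (b v) ≠ 0

variable {b}

lemma not_hasNoncollinearPair_iff {S : Finset ι} :
    ¬HasNoncollinearPair b S ↔ ∀ u ∈ S, ∀ v ∈ S, wedge (b u) (b v) = 0 := by
  simp [HasNoncollinearPair]

lemma HasNoncollinearPair.mono {S T : Finset ι} (h : HasNoncollinearPair b S) (hST : S ⊆ T) :
    HasNoncollinearPair b T :=
  let ⟨u, hu, v, hv, huv⟩ := h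
  ⟨u, hST hu, v, hST hv, huv⟩

lemma HasNoncollinearPair.image [DecidableEq ι] {κ : Type*} {f : κ → ι} {S : Finset κ}
    (h : HasNoncollinearPair (fun t => b (f t)) S) : HasNoncollinearPair b (S.image f) :=
  let ⟨u, hu, v, hv, huv⟩ := h
  ⟨f u, mem_image_of_mem f hu, f v, mem_image_of_mem f hv, huv⟩

lemma not_hasNoncollinearPair_of_wedge_eq_zero {S : Finset ι} {c : ℤ × ℤ} (hc : c ≠ 0)
    (h : ∀ t ∈ S, wedge c (b t) = 0) : ¬HasNoncollinearPair b S :=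
  not_hasNoncollinearPair_iff.2 fun u hu v hv =>
    wedge_eq_zero_trans (by rw [wedge_comm, h u hu, neg_zero]) (h v hv) hc

/-- In a balanced family each vector is minus the sum of the others, so it lies on any line
containing all the others. -/
lemma HasNoncollinearPair.erase_of_sum_eq_zero [DecidableEq ι] {S : Finset ι}
    (h : HasNoncollinearPair b S) (hsum : ∑ t ∈ S, b t = 0) (x : ι) :
    HasNoncollinearPair b (S.erase x) := by
  by_cases hxS : x ∈ S
  swap
  · rwa [erase_eq_of_notMem hxS]
  by_contra hx
  rw [not_hasNoncollinearPair_iff] at hx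
  have hxv : ∀ v ∈ S, wedge (b x) (b v) = 0 := by
    intro v hv
    by_cases hvx : v = x
    · rw [hvx, wedge_self]
    rw [← add_sum_erase S b hxS, add_eq_zero_iff_eq_neg] at hsum
    rw [hsum, wedge_neg_left, wedge_sum_left,
      sum_eq_zero fun t ht => hx t ht v (mem_erase.2 ⟨hvx, hv⟩), neg_zero]
  refine not_hasNoncollinearPair_iff.2 (fun u hu v hv => ?_) h
  by_cases hux : u = x
  · exact hux ▸ hxv v hv
  by_cases hvx : v = x
  · rw [hvx, wedge_comm, hxv u hu, neg_zero]
  exact hx u (mem_erase.2 ⟨hux, hu⟩) v (mem_erase.2 ⟨hvx, hv⟩)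

end NoncollinearPair

section Windows

variable {b : ℕ → ℤ × ℤ} {n r : ℕ}

lemma exists_window_hasNoncollinearPair (hr : 2 ≤ r) (hrn : r ≤ n)
    (hne : ∀ t < n, b t ≠ 0) (h : HasNoncollinearPair b (range n)) :
    ∃ s, s + r ≤ n ∧ HasNoncollinearPair b (Ico s (s + r)) := by
  by_contra! hall
  have hline : ∀ y < n, wedge (b 0) (b y) = 0 := by
    intro y hy
    induction y with
    | zero => exact wedge_self _
    | succ y ih =>
      have hstep := not_hasNoncollinearPair_iff.1 (hall (min y (n - r)) (by omega))
        y (by rw [mem_Ico]; omega) (y + 1) (by rw [mem_Ico]; omega)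
      exact wedge_eq_zero_trans (ih (by omega)) hstep (hne y (by omega))
  exact not_hasNoncollinearPair_of_wedge_eq_zero (hne 0 (by omega))
    (fun t ht => hline t (mem_range.1 ht)) h

/-- Removing an end vector from a noncollinear window of sum zero leaves a noncollinear pair, so
a neighbouring window is noncollinear too. If it also had sum zero, then `b x = b (x + r)` for the
two windows `[x, x + r)` and `[x + 1, x + r + 1)`, and `hret` would put `b x, …, b (x + r)` on
one line. -/
lemma exists_window_hasNoncollinearPair_sum_ne_zero (hr : 2 ≤ r) (hrn : r ≤ n)
    (hne : ∀ t < n, b t ≠ 0)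
    (hret : ∀ x t y, x ≤ t → t ≤ y → y < n → b x = b y → wedge (b x) (b t) = 0)
    (h : HasNoncollinearPair b (range n)) (hsum : ∑ t ∈ range n, b t ≠ 0) :
    ∃ s, s + r ≤ n ∧ HasNoncollinearPair b (Ico s (s + r)) ∧ ∑ t ∈ Ico s (s + r), b t ≠ 0 := by
  obtain ⟨s, hs, hW⟩ := exists_window_hasNoncollinearPair hr hrn hne h
  by_contra! hzero
  have hWsum := hzero s hs hW
  obtain ⟨x, hx, hT⟩ : ∃ x, x + r < n ∧ HasNoncollinearPair b (Ico (x + 1) (x + r)) := by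
    rcases hs.lt_or_eq with hlt | heq
    · exact ⟨s, hlt, (hW.erase_of_sum_eq_zero hWsum s).mono fun t ht => by
        simp only [mem_erase, mem_Ico] at ht ⊢; omega⟩
    · obtain ⟨x, rfl⟩ : ∃ x, s = x + 1 := by
        refine Nat.exists_eq_add_one.2 (Nat.pos_of_ne_zero fun hs0 => hsum ?_)
        subst hs0
        rwa [← heq, range_eq_Ico]
      exact ⟨x, by omega,
        (hW.erase_of_sum_eq_zero hWsum (x + r)).mono fun t ht => by
          simp only [mem_erase, mem_Ico] at ht ⊢; omega⟩
  have hleft := hzero x hx.le (hT.mono (Ico_subset_Ico (by omega) le_rfl))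
  have hright := hzero (x + 1) (by omega) (hT.mono (Ico_subset_Ico le_rfl (by omega)))
  rw [sum_eq_sum_Ico_succ_bot (by omega)] at hleft
  rw [show x + 1 + r = x + r + 1 by omega, sum_Ico_succ_top (by omega)] at hright
  have hxr : b x = b (x + r) :=
    (eq_neg_of_add_eq_zero_left hleft).trans (eq_neg_of_add_eq_zero_right hright).symm
  exact not_hasNoncollinearPair_of_wedge_eq_zero (hne x (by omega))
    (fun t ht => hret x t (x + r) (by rw [mem_Ico] at ht; omega) (by rw [mem_Ico] at ht; omega)
      hx hxr) hT

end Windows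

/-- If `c 0, …, c (n - 1)` lie on a line `L`, balance puts `c n + c (n + 1)` on `L`, so neither
of the two noncollinear vectors `c n`, `c (n + 1)` lies on `L`. -/
lemma wedge_ne_zero_of_not_hasNoncollinearPair {c : ℕ → ℤ × ℤ} {n : ℕ} (hn : 0 < n)
    (hne : ∀ t < n + 2, c t ≠ 0) (hbal : ∑ t ∈ range (n + 2), c t = 0)
    (hpair : wedge (c n) (c (n + 1)) ≠ 0) (hJ : ¬HasNoncollinearPair c (range n)) :
    wedge (c (n + 1)) (c 0) ≠ 0 ∧ wedge (c (n - 1)) (c n) ≠ 0 := by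
  have hL : ∀ t < n, wedge (c t) (c 0) = 0 := fun t ht =>
    not_hasNoncollinearPair_iff.1 hJ t (mem_range.2 ht) 0 (mem_range.2 (by omega))
  have hsum : wedge (c n) (c 0) + wedge (c (n + 1)) (c 0) = 0 := by
    rw [sum_range_succ, sum_range_succ, add_assoc] at hbal
    rw [← wedge_add_left, eq_neg_of_add_eq_zero_right hbal, wedge_neg_left, wedge_sum_left,
      sum_eq_zero fun t ht => hL t (mem_range.1 ht), neg_zero]
  have h0 := hne 0 (by omega)
  have hn0 : wedge (c n) (c 0) ≠ 0 := fun h => hpair <| wedge_eq_zero_trans h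
    (by rw [wedge_comm, neg_eq_zero]; linarith) h0
  refine ⟨fun h => hn0 (by linarith), fun h => hn0 ?_⟩
  exact wedge_eq_zero_trans (by rw [wedge_comm, h, neg_zero]) (hL (n - 1) (by omega))
    (hne (n - 1) (by omega))

lemma add_mod_injOn (q m : ℕ) : Set.InjOn (fun d => (q + d) % m) (range m) := by
  intro d hd e he h
  have := Nat.ModEq.add_left_cancel' q h
  rwa [Nat.ModEq, Nat.mod_eq_of_lt (mem_range.1 hd), Nat.mod_eq_of_lt (mem_range.1 he)] at this

lemma image_add_mod_range (q m : ℕ) : (range m).image (fun d => (q + d) % m) = range m := by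
  refine eq_of_subset_of_card_le (fun x hx => ?_) ?_
  · obtain ⟨d, hd, rfl⟩ := mem_image.1 hx
    exact mem_range.2 (Nat.mod_lt _ (Nat.zero_lt_of_lt (mem_range.1 hd)))
  · rw [card_image_of_injOn (add_mod_injOn q m)]

lemma sum_range_add_mod {M : Type*} [AddCommMonoid M] (f : ℕ → M) (q m : ℕ) :
    ∑ d ∈ range m, f ((q + d) % m) = ∑ t ∈ range m, f t := by
  conv_rhs => rw [← image_add_mod_range q m, sum_image (add_mod_injOn q m)]

lemma sum_range_sub_two_add_add {M : Type*} [AddCommMonoid M] (f : ℕ → M) {m p : ℕ}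
    (hm : 2 ≤ m) (hp : p < m) :
    ∑ t ∈ range (m - 2), f ((p + 2 + t) % m) + f p + f ((p + 1) % m) = ∑ t ∈ range m, f t := by
  obtain ⟨n, rfl⟩ : ∃ n, m = n + 2 := ⟨m - 2, by omega⟩
  rw [← sum_range_add_mod f (p + 2), sum_range_succ, sum_range_succ, Nat.add_sub_cancel,
    show p + 2 + n = p + (n + 2) by omega, show p + 2 + (n + 1) = p + 1 + (n + 2) by omega,
    Nat.add_mod_right, Nat.add_mod_right, Nat.mod_eq_of_lt hp]

lemma filter_range_ne_add_mod_eq_image_Ico (k j m : ℕ) :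
    @filter _ (fun s => ∀ d ∈ range (j + 1), s ≠ (k + d) % m)
      (fun _ => decidableDforallFinset) (range m) =
      (Ico (j + 1) m).image (fun d => (k + d) % m) := by
  ext x
  simp only [mem_filter, mem_image, mem_Ico, mem_range]
  constructor
  · rintro ⟨hx, hno⟩
    obtain ⟨u, hu, rfl⟩ := mem_image.1 ((image_add_mod_range k m).symm ▸ mem_range.2 hx)
    exact ⟨u, ⟨not_lt.1 fun h => hno u h rfl, mem_range.1 hu⟩, rfl⟩
  · rintro ⟨u, ⟨hju, hum⟩, rfl⟩
    refine ⟨Nat.mod_lt _ (by omega), fun d hd h => ?_⟩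
    have := add_mod_injOn k m (mem_range.2 hum) (mem_range.2 (by omega)) h
    omega

section CyclicFamily

variable {m : ℕ} {a : ℕ → ℤ × ℤ}

lemma wedge_eq_zero_of_le_of_le (hne : ∀ k < m, a k ≠ 0)
    (hord : ∀ k l : ℕ, k ≤ l → l < m → arg2pi (a k) ≤ arg2pi (a l)) {x t y : ℕ}
    (hxt : x ≤ t) (hty : t ≤ y) (hy : y < m) (heq : a x = a y) : wedge (a x) (a t) = 0 :=
  wedge_eq_zero_of_arg2pi_eq (hne x (by omega)) (hne t (by omega))
    (le_antisymm (hord x t hxt (by omega)) (heq ▸ hord t y hty hy))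

/-- Read cyclically from `p + 2`, the family returns to a vector only along its line: a return
across the end of the angular order would squeeze `arg (a p) = arg (a (p + 1))`. -/
lemma wedge_eq_zero_of_cyclic_eq (hne : ∀ k < m, a k ≠ 0)
    (hord : ∀ k l : ℕ, k ≤ l → l < m → arg2pi (a k) ≤ arg2pi (a l)) {p : ℕ} (hp : p < m)
    (hpair : wedge (a p) (a ((p + 1) % m)) ≠ 0) {x t y : ℕ} (hxt : x ≤ t) (hty : t ≤ y)
    (hy : y < m - 2) (heq : a ((p + 2 + x) % m) = a ((p + 2 + y) % m)) :
    wedge (a ((p + 2 + x) % m)) (a ((p + 2 + t) % m)) = 0 := by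
  have hsub : ∀ z, m ≤ z → z < 2 * m → z % m = z - m := fun z h1 h2 => by
    rw [Nat.mod_eq_sub_mod h1, Nat.mod_eq_of_lt (by omega)]
  by_cases hyw : p + 2 + y < m
  · simp only [Nat.mod_eq_of_lt (by omega : p + 2 + x < m),
      Nat.mod_eq_of_lt (by omega : p + 2 + t < m), Nat.mod_eq_of_lt hyw] at heq ⊢
    exact wedge_eq_zero_of_le_of_le hne hord (by omega) (by omega) hyw heq
  by_cases hxw : m ≤ p + 2 + x
  · simp only [hsub (p + 2 + x) hxw (by omega), hsub (p + 2 + t) (by omega) (by omega),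
      hsub (p + 2 + y) (by omega) (by omega)] at heq ⊢
    exact wedge_eq_zero_of_le_of_le hne hord (by omega) (by omega) (by omega) heq
  exfalso
  rw [Nat.mod_eq_of_lt (by omega : p + 2 + x < m), hsub (p + 2 + y) (by omega) (by omega)] at heq
  rw [Nat.mod_eq_of_lt (by omega : p + 1 < m)] at hpair
  have h1 := hord (p + 2 + y - m) p (by omega) hp
  have h2 := hord p (p + 1) (by omega) (by omega)
  have h3 := hord (p + 1) (p + 2 + x) (by omega) (by omega)
  rw [heq] at h3
  exact hpair (wedge_eq_zero_of_arg2pi_eq (hne p hp) (hne (p + 1) (by omega)) (by linarith))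

lemma wedge_ne_zero_of_not_hasNoncollinearPair_rest (hm : 2 < m) (hne : ∀ k < m, a k ≠ 0)
    (hbal : ∑ k ∈ range m, a k = 0) {p : ℕ} (hp : p < m)
    (hpair : wedge (a p) (a ((p + 1) % m)) ≠ 0)
    (hJ : ¬HasNoncollinearPair (fun t => a ((p + 2 + t) % m)) (range (m - 2))) :
    wedge (a ((p + 1) % m)) (a ((p + 2) % m)) ≠ 0 ∧ wedge (a ((p + m - 1) % m)) (a p) ≠ 0 := by
  have hrot := wedge_ne_zero_of_not_hasNoncollinearPair (c := fun t => a ((p + 2 + t) % m))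
    (n := m - 2) (by omega) (fun t _ => hne _ (Nat.mod_lt _ (by omega)))
    (by rw [show m - 2 + 2 = m by omega, sum_range_add_mod, hbal])
  simp only [show p + 2 + (m - 2) = p + m by omega, show p + 2 + (m - 2 + 1) = p + 1 + m by omega,
    show p + 2 + (m - 2 - 1) = p + m - 1 by omega, add_zero, Nat.add_mod_right,
    Nat.mod_eq_of_lt hp] at hrot
  exact hrot hpair hJ

lemma exists_noncollinear_adjacent_pair (hm : 3 < m) (hne : ∀ k < m, a k ≠ 0)
    (hbal : ∑ k ∈ range m, a k = 0) {i : ℕ} (hi : i < m)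
    (hcol : wedge (a ((i + m - 1) % m)) (a i) ≠ 0 ∨ wedge (a i) (a ((i + 1) % m)) ≠ 0) :
    ∃ p < m, (i = p ∨ i = (p + 1) % m) ∧ wedge (a p) (a ((p + 1) % m)) ≠ 0 ∧
      HasNoncollinearPair (fun t => a ((p + 2 + t) % m)) (range (m - 2)) := by
  set q := (i + m - 1) % m
  have hq : q < m := Nat.mod_lt _ (by omega)
  have hshift : ∀ t, (q + (t + 1)) % m = (i + t) % m := fun t => by
    rw [Nat.mod_add_mod, show i + m - 1 + (t + 1) = i + t + m by omega, Nat.add_mod_right]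
  have hq1 : (q + 1) % m = i := by rw [hshift 0, add_zero, Nat.mod_eq_of_lt hi]
  by_cases hnext : wedge (a i) (a ((i + 1) % m)) ≠ 0
  · by_cases hJ : HasNoncollinearPair (fun t => a ((i + 2 + t) % m)) (range (m - 2))
    · exact ⟨i, hi, Or.inl rfl, hnext, hJ⟩
    obtain ⟨h1, h2⟩ := wedge_ne_zero_of_not_hasNoncollinearPair_rest (by omega) hne hbal hi hnext hJ
    refine ⟨q, hq, Or.inr hq1.symm, by rwa [hq1], 0, mem_range.2 (by omega), 1,
      mem_range.2 (by omega), ?_⟩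
    simpa only [add_assoc, hshift] using h1
  · have hprev : wedge (a q) (a ((q + 1) % m)) ≠ 0 := by
      rw [hq1]; exact hcol.resolve_right hnext
    refine ⟨q, hq, Or.inr hq1.symm, hprev, ?_⟩
    by_contra hJ
    have := (wedge_ne_zero_of_not_hasNoncollinearPair_rest (by omega) hne hbal hq hprev hJ).1
    rw [hq1, hshift 1] at this
    exact hnext this

lemma exists_block (hm : 3 < m) (hne : ∀ k < m, a k ≠ 0) (hbal : ∑ k ∈ range m, a k = 0)
    (hord : ∀ k l : ℕ, k ≤ l → l < m → arg2pi (a k) ≤ arg2pi (a l)) {i : ℕ} (hi : i < m)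
    (hcol : wedge (a ((i + m - 1) % m)) (a i) ≠ 0 ∨ wedge (a i) (a ((i + 1) % m)) ≠ 0)
    {j : ℕ} (hj1 : 1 ≤ j) (hj2 : j ≤ m - 3) :
    ∃ k < m, (∃ d ≤ j, (k + d) % m = i) ∧
      HasNoncollinearPair (fun d => a ((k + d) % m)) (range (j + 1)) ∧
      HasNoncollinearPair (fun d => a ((k + d) % m)) (Ico (j + 1) m) ∧
      ∑ d ∈ Ico (j + 1) m, a ((k + d) % m) ≠ 0 := by
  obtain ⟨p, hp, hip, hpair, hJ⟩ := exists_noncollinear_adjacent_pair hm hne hbal hi hcol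
  have hJsum : ∑ t ∈ range (m - 2), a ((p + 2 + t) % m) ≠ 0 := fun h0 => hpair <| by
    have h := (sum_range_sub_two_add_add a (by omega) hp).trans hbal
    rw [h0, zero_add] at h
    rw [eq_neg_of_add_eq_zero_right h, wedge_comm, wedge_neg_left, wedge_self, neg_zero, neg_zero]
  obtain ⟨s, hs, hW, hWsum⟩ := exists_window_hasNoncollinearPair_sum_ne_zero
    (b := fun t => a ((p + 2 + t) % m)) (r := m - 1 - j) (by omega) (by omega)
    (fun t _ => hne _ (Nat.mod_lt _ (by omega)))
    (fun x t y hxt hty hy heq => wedge_eq_zero_of_cyclic_eq hne hord hp hpair hxt hty hy heq)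
    hJ hJsum
  -- the block starts at `N % m`, right after the window `[s, s + m - 1 - j)` of the rest
  set N := p + 2 + s + (m - 1 - j)
  have hN : ∀ d, (N % m + d) % m = (N + d) % m := fun d => Nat.mod_add_mod N m d
  have hwin : ∀ t, (N % m + (t + (j + 1 - s))) % m = (p + 2 + t) % m := fun t => by
    rw [hN, show N + (t + (j + 1 - s)) = p + 2 + t + m by omega, Nat.add_mod_right]
  have hp0 : (N % m + (j - 1 - s)) % m = p := by
    rw [hN, show N + (j - 1 - s) = p + m by omega, Nat.add_mod_right, Nat.mod_eq_of_lt hp]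
  have hp1 : (N % m + (j - s)) % m = (p + 1) % m := by
    rw [hN, show N + (j - s) = p + 1 + m by omega, Nat.add_mod_right]
  have hIco : Ico (j + 1) m = Ico (s + (j + 1 - s)) (s + (m - 1 - j) + (j + 1 - s)) := by
    congr 1 <;> omega
  refine ⟨N % m, Nat.mod_lt _ (by omega), ?_, ⟨j - 1 - s, mem_range.2 (by omega), j - s,
    mem_range.2 (by omega), by simpa only [hp0, hp1] using hpair⟩, ?_, ?_⟩
  · rcases hip with rfl | rfl
    exacts [⟨j - 1 - s, by omega, hp0⟩, ⟨j - s, by omega, hp1⟩]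
  · rw [hIco, ← image_add_right_Ico]
    exact HasNoncollinearPair.image (by simpa only [hwin] using hW)
  · rw [hIco, ← sum_Ico_add']
    simpa only [hwin] using hWsum

end CyclicFamily

theorem stmt12_general (m : ℕ) (hm : 3 < m) (a : ℕ → ℤ × ℤ)
    (hne : ∀ k < m, a k ≠ 0)
    (hbal : ∑ k ∈ Finset.range m, a k = 0)
    (hord : ∀ k l : ℕ, k ≤ l → l < m → arg2pi (a k) ≤ arg2pi (a l))
    (i : ℕ) (hi : i < m)
    (hcol : wedge (a ((i + m - 1) % m)) (a i) ≠ 0 ∨ wedge (a i) (a ((i + 1) % m)) ≠ 0)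
    (j : ℕ) (hj1 : 1 ≤ j) (hj2 : j ≤ m - 3) :
    ∃ k < m,
      (∃ d ≤ j, (k + d) % m = i) ∧
      Submodule.span ℝ ((fun d => toR (a ((k + d) % m))) '' {d | d ≤ j}) = ⊤ ∧
      (∑ d ∈ Finset.range (j + 1), a ((k + d) % m)) ≠ 0 ∧
      (∀ s ∈ @Finset.filter _
          (fun s => ∀ d ∈ Finset.range (j + 1), s ≠ (k + d) % m)
          (fun _ => Finset.decidableDforallFinset) (Finset.range m), a s ≠ 0) ∧
      ((∑ s ∈ @Finset.filter _
            (fun s => ∀ d ∈ Finset.range (j + 1), s ≠ (k + d) % m)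
            (fun _ => Finset.decidableDforallFinset) (Finset.range m), a s) +
          ∑ d ∈ Finset.range (j + 1), a ((k + d) % m) = 0) ∧
      Submodule.span ℝ
        (insert (toR (∑ d ∈ Finset.range (j + 1), a ((k + d) % m)))
          ((fun s => toR (a s)) ''
            {s | s < m ∧ ∀ d ∈ Finset.range (j + 1), s ≠ (k + d) % m})) = ⊤ := by
  obtain ⟨k, hk, hik, hblock, hwin, hwinsum⟩ := exists_block hm hne hbal hord hi hcol hj1 hj2
  have hpart : ∑ d ∈ range (j + 1), a ((k + d) % m) + ∑ d ∈ Ico (j + 1) m, a ((k + d) % m) = 0 :=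
    (sum_range_add_sum_Ico _ (by omega)).trans ((sum_range_add_mod a k m).trans hbal)
  have hcompl := filter_range_ne_add_mod_eq_image_Ico k j m
  have hmem (u : ℕ) (hu : u ∈ Ico (j + 1) m) :
      (k + u) % m ∈ {s | s < m ∧ ∀ d ∈ range (j + 1), s ≠ (k + d) % m} := by
    have h := mem_image_of_mem (fun d => (k + d) % m) hu
    rw [← hcompl, mem_filter] at h
    exact ⟨mem_range.1 h.1, h.2⟩
  refine ⟨k, hk, hik, ?_, fun h0 => hwinsum ?_, fun s hs => hne s (mem_range.1 (mem_filter.1 hs).1),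
    ?_, ?_⟩
  · obtain ⟨u, hu, v, hv, huv⟩ := hblock
    exact span_eq_top_of_wedge_ne_zero huv ⟨u, Nat.lt_succ_iff.1 (mem_range.1 hu), rfl⟩
      ⟨v, Nat.lt_succ_iff.1 (mem_range.1 hv), rfl⟩
  · rwa [h0, zero_add] at hpart
  · rw [hcompl, sum_image ((add_mod_injOn k m).mono fun u hu => mem_range.2 (mem_Ico.1 hu).2),
      add_comm, hpart]
  · obtain ⟨u, hu, v, hv, huv⟩ := hwin
    exact span_eq_top_of_wedge_ne_zero huv (Set.mem_insert_of_mem _ ⟨_, hmem u hu, rfl⟩)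
      (Set.mem_insert_of_mem _ ⟨_, hmem v hv, rfl⟩)

/-- observation (O): for a balanced nondegenerate cyclically
angle-ordered family `Δ = (a₀, …, a_{m−1})` of nonzero vectors of `ℤ²` with
`m > 3`, an index `i` with `a_i` not collinear with `a_{i−1}` or not collinear
with `a_{i+1}`, and `1 ≤ j ≤ m − 3`, there is a cyclic block of `j + 1`
consecutive vectors containing `a_i`, spanning `ℝ²`, with nonzero sum `a´`, such
that replacing the block by `a´` again yields a family of nonzero vectors that is
balanced and spans `ℝ²`. -/
theorem stmt12 (m : ℕ) (hm : 3 < m) (a : ℕ → ℤ × ℤ)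
    (hne : ∀ k < m, a k ≠ 0)
    (hbal : ∑ k ∈ Finset.range m, a k = 0)
    (hspan : Submodule.span ℝ ((fun k => toR (a k)) '' {k | k < m}) = ⊤)
    (hord : ∀ k l : ℕ, k ≤ l → l < m → arg2pi (a k) ≤ arg2pi (a l))
    (i : ℕ) (hi : i < m)
    (hcol : wedge (a ((i + m - 1) % m)) (a i) ≠ 0 ∨ wedge (a i) (a ((i + 1) % m)) ≠ 0)
    (j : ℕ) (hj1 : 1 ≤ j) (hj2 : j ≤ m - 3) :
    ∃ k < m,
      (∃ d ≤ j, (k + d) % m = i) ∧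
      Submodule.span ℝ ((fun d => toR (a ((k + d) % m))) '' {d | d ≤ j}) = ⊤ ∧
      (∑ d ∈ Finset.range (j + 1), a ((k + d) % m)) ≠ 0 ∧
      (∀ s ∈ @Finset.filter _
          (fun s => ∀ d ∈ Finset.range (j + 1), s ≠ (k + d) % m)
          (fun _ => Finset.decidableDforallFinset) (Finset.range m), a s ≠ 0) ∧
      ((∑ s ∈ @Finset.filter _
            (fun s => ∀ d ∈ Finset.range (j + 1), s ≠ (k + d) % m)
            (fun _ => Finset.decidableDforallFinset) (Finset.range m), a s) +
          ∑ d ∈ Finset.range (j + 1), a ((k + d) % m) = 0) ∧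
      Submodule.span ℝ
        (insert (toR (∑ d ∈ Finset.range (j + 1), a ((k + d) % m)))
          ((fun s => toR (a s)) ''
            {s | s < m ∧ ∀ d ∈ Finset.range (j + 1), s ≠ (k + d) % m})) = ⊤ :=
  stmt12_general m hm a hne hbal hord i hi hcol j hj1 hj2
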